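/- arXiv:0808.3369 — 2 statements merged into one kernel-verified Lean document; each statement's English description precedes it below -/
import Mathlib

section
/- Let a, b, c be real numbers with a > 0, b > 0, c > 0. Then every complex root k of the equation -a*i*k = b*k^2 - c has strictly negative imaginary part; indeed the roots are k = (-i*a ± sqrt(4*b*c - a^2))/(2*b). -/
/- With `k = x + iy`, the imaginary part of `b k² + i a k - c = 0` reads `x (2 b y + a) = 0`.
Either `y = -a / (2b) < 0`, or `x = 0` and then `b y² + a y + c = 0`, which has no root `y ≥ 0`
since all coefficients are positive. The root formula is the quadratic formula, the
discriminant being `(i a)² + 4 b c = 4 b c - a²`. -/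

open Complex

lemma discrim_ofReal_mul_I (a b c : ℝ) :
    discrim (b : ℂ) (I * a) (-c) = 4 * b * c - (a : ℂ) ^ 2 := by
  rw [discrim]
  linear_combination (a : ℂ) ^ 2 * I_sq

lemma im_neg_of_quadratic_eq_zero {a b c : ℝ} (ha : 0 < a) (hb : 0 < b) (hc : 0 < c) {k : ℂ}
    (hk : (b : ℂ) * (k * k) + I * a * k + -c = 0) : k.im < 0 := by
  have hre := congrArg re hk
  have him := congrArg im hk
  simp only [add_re, add_im, mul_re, mul_im, neg_re, neg_im, ofReal_re, ofReal_im, I_re, I_im,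
    zero_re, zero_im] at hre him
  have hfactor : k.re * (2 * b * k.im + a) = 0 := by linear_combination him
  rcases mul_eq_zero.mp hfactor with hx | hy
  · rw [hx] at hre
    nlinarith
  · nlinarith

/-- Every complex root `k` of `-a i k = b k² - c` (with `a, b, c > 0` real) has
strictly negative imaginary part, and the roots are `k = (-i a ± √(4bc - a²))/(2b)`,
where the square root is a complex square root `s` with `s² = 4bc - a²`. -/
theorem stmt_0 (a b c : ℝ) (ha : 0 < a) (hb : 0 < b) (hc : 0 < c) (k : ℂ)
    (hroot : -(a : ℂ) * Complex.I * k = (b : ℂ) * k ^ 2 - (c : ℂ)) :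
    k.im < 0 ∧
      ∃ s : ℂ, s ^ 2 = 4 * (b : ℂ) * (c : ℂ) - (a : ℂ) ^ 2 ∧
        (k = (-Complex.I * (a : ℂ) + s) / (2 * (b : ℂ)) ∨
         k = (-Complex.I * (a : ℂ) - s) / (2 * (b : ℂ))) := by
  have hk : (b : ℂ) * (k * k) + I * a * k + -c = 0 := by linear_combination -hroot
  obtain ⟨s, hs⟩ := IsAlgClosed.exists_eq_mul_self (discrim (b : ℂ) (I * a) (-c))
  have hb' : (b : ℂ) ≠ 0 := ofReal_ne_zero.mpr hb.ne'
  refine ⟨im_neg_of_quadratic_eq_zero ha hb hc hk, s, ?_, ?_⟩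
  · rw [sq, ← hs, discrim_ofReal_mul_I]
  · simpa only [neg_mul] using (quadratic_eq_zero_iff hb' hs k).mp hk
end

section
/- Suppose ξ is a 1-form on an exterior domain D in ℝ³ satisfying d*dξ = k²ξ, d*ξ = 0, with boundary condition ξ|_{T∂D} = i_n η|_{T∂D} where ikη = dξ. If the integration-by-parts identity -ik∫_{∂D}(j,j)dA = k²∫_D(ξ,ξ)dV - ∫_D(dξ,dξ)dV holds with j = ξ|_{T∂D}, and j, ξ, dξ are not all zero, then writing a = ∫_{∂D}(j,j)dA ≥ 0, b = ∫_D(ξ,ξ)dV > 0, c = ∫_D(dξ,dξ)dV > 0, the frequency k satisfies b k² + i a k - c = 0 and hence Im k ≤ 0, with Im k < 0 when a > 0. -/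
/-- Uniqueness argument for the non-self-adjoint interior boundary value problem from
the generalized Debye source representation.  With `a = ∫_{∂D}(j,j)dA ≥ 0`,
`b = ∫_D(ξ,ξ)dV > 0`, `c = ∫_D(dξ,dξ)dV > 0`, if the integration-by-parts identity
`-ik a = k² b - c` holds, then `b k² + i a k - c = 0`, hence `Im k ≤ 0`, and
`Im k < 0` when `a > 0`. -/
theorem stmt_18 (a b c : ℝ) (ha : 0 ≤ a) (hb : 0 < b) (hc : 0 < c) (k : ℂ)
    (hIBP : -(Complex.I * k) * (a : ℂ) = k ^ 2 * (b : ℂ) - (c : ℂ)) :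
    (b : ℂ) * k ^ 2 + Complex.I * (a : ℂ) * k - (c : ℂ) = 0 ∧
      k.im ≤ 0 ∧ (0 < a → k.im < 0) := by
  have heq : (b : ℂ) * k ^ 2 + Complex.I * (a : ℂ) * k - (c : ℂ) = 0 := by
    linear_combination -hIBP
  refine ⟨heq, ?_⟩
  set x := k.re with hx
  set y := k.im with hy
  have hre := congrArg Complex.re heq
  have him := congrArg Complex.im heq
  simp [Complex.ext_iff, pow_two, Complex.mul_re, Complex.mul_im, ← hx, ← hy] at hre him
  -- hre : b*(x*x - y*y) - a*y - c = 0 (some form), him : 2bxy + ax = 0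
  by_cases hx0 : x = 0
  · rw [hx0] at hre
    have hneg : y < 0 := by
      by_contra h
      push_neg at h
      nlinarith [mul_nonneg (mul_nonneg hb.le h) h, mul_nonneg ha h]
    exact ⟨hneg.le, fun _ => hneg⟩
  · have key : 2 * b * y + a = 0 := by
      have : x * (2 * b * y + a) = 0 := by nlinarith [him]
      rcases mul_eq_zero.mp this with h | h
      · exact absurd h hx0
      · exact h
    constructor
    · nlinarith
    · intro hapos; nlinarith
end
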